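/- Let B = (b_{ij}) be an n×n skew-symmetrizable integer matrix with b_{ij} ≥ 0 whenever i < j, let A be its Cartan companion, and let R_i be the simple reflections of A acting on the root lattice. For ℓ ≥ 0 set R^{(ℓ)} := R_{⟨1⟩}∘R_{⟨2⟩}∘⋯∘R_{⟨ℓ⟩} (with R^{(0)} = Id), the action of the length-ℓ prefix of the infinite word s_1 s_2 ⋯ s_n s_1 s_2 ⋯ on the root lattice. Assume that for every m ≥ 1 all coordinates of R^{(m−1)}(e_{⟨m⟩}) are nonnegative (this holds whenever A is not of finite type, since then every prefix of c^∞ is a reduced word). Define 2n×n integer matrices by M_0 := the block matrix with B on top of the n×n identity matrix, and M_ℓ := μ_{⟨ℓ⟩}(M_{ℓ−1}) for ℓ ≥ 1, and let C_ℓ denote the bottom n×n submatrix of M_ℓ. Then for every ℓ ≥ 0 and every 1 ≤ i ≤ n, the i-th column of C_ℓ equals R^{(ℓ)}(e_i) (i.e., the c-vector α_{i;t_ℓ} equals c^∞_{≤ℓ} α_i). Moreover, for every ℓ ≥ 1, every entry of the ⟨ℓ⟩-th column of C_ℓ is ≤ 0 and every entry of the ⟨ℓ+1⟩-th column of C_ℓ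 is ≥ 0 (the c-vector α_{⟨ℓ⟩;t_ℓ} is a negative root and α_{⟨ℓ+1⟩;t_ℓ} is a positive root). -/
import Mathlib


open Finset

/-- The simple reflection `s_i` of the Weyl group of `A` acting on the root lattice
in the basis of simple roots: `R_i(e_j) = e_j - a_{ij} e_i`. -/
def Rmap {n : ℕ} (A : Matrix (Fin n) (Fin n) ℤ) (i : Fin n) (v : Fin n → ℤ) : Fin n → ℤ :=
  v - (∑ j, A i j * v j) • Pi.single i (1 : ℤ)

/-- `⟨m⟩ ∈ {1, …, n}` (0-indexed as an element of `Fin n`): the unique element of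
`{1, …, n}` congruent to `m` modulo `n`. -/
def idx (n : ℕ) (hn : 0 < n) (m : ℤ) : Fin n :=
  ⟨((m - 1) % (n : ℤ)).toNat, by
    have h0 : (0 : ℤ) < (n : ℤ) := Int.natCast_pos.mpr hn
    have h1 : 0 ≤ (m - 1) % (n : ℤ) := Int.emod_nonneg _ (ne_of_gt h0)
    have h2 : (m - 1) % (n : ℤ) < (n : ℤ) := Int.emod_lt_of_pos _ h0
    omega⟩

/-- `B` is skew-symmetrizable: `DB` is skew-symmetric for some diagonal `D` with
positive diagonal entries. -/
def IsSkewSymmetrizable {n : ℕ} (B : Matrix (Fin n) (Fin n) ℤ) : Prop :=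
  ∃ d : Fin n → ℚ, (∀ i, 0 < d i) ∧ ∀ i j, d i * (B i j : ℚ) = -(d j * (B j i : ℚ))

/-- The Cartan companion of `B`: `a_{ii} = 2`, `a_{ij} = −|b_{ij}|` for `i ≠ j`. -/
def cartanCompanion {n : ℕ} (B : Matrix (Fin n) (Fin n) ℤ) : Matrix (Fin n) (Fin n) ℤ :=
  Matrix.of fun i j => if i = j then 2 else -|B i j|

/-- Matrix mutation `μ_k` of a `2n×n` exchange matrix (rows `Sum.inl` form the
principal part; the row with the same index as column `k` is `Sum.inl k`). -/
def mutate {n : ℕ} (k : Fin n) (M : Matrix (Fin n ⊕ Fin n) (Fin n) ℤ) :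
    Matrix (Fin n ⊕ Fin n) (Fin n) ℤ :=
  Matrix.of fun i j =>
    if i = Sum.inl k ∨ j = k then -M i j
    else M i j + max (M i k) 0 * max (M (Sum.inl k) j) 0
        - max (-M i k) 0 * max (-M (Sum.inl k) j) 0

/-- The initial exchange matrix with principal coefficients: `B` on top of the
identity matrix. -/
def initialM {n : ℕ} (B : Matrix (Fin n) (Fin n) ℤ) : Matrix (Fin n ⊕ Fin n) (Fin n) ℤ :=
  Matrix.of fun i j => Sum.elim (fun r => B r j) (fun r => if r = j then 1 else 0) i

/-- `M_ℓ`: iterated mutation of the principal-coefficients exchange matrix along the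
cyclic sequence of directions `⟨1⟩, ⟨2⟩, …`. -/
def Mseq {n : ℕ} (hn : 0 < n) (B : Matrix (Fin n) (Fin n) ℤ) :
    ℕ → Matrix (Fin n ⊕ Fin n) (Fin n) ℤ
  | 0 => initialM B
  | ℓ + 1 => mutate (idx n hn ((ℓ : ℤ) + 1)) (Mseq hn B ℓ)

/-- `R^{(ℓ)} = R_{⟨1⟩}∘R_{⟨2⟩}∘⋯∘R_{⟨ℓ⟩}`: the action of the length-`ℓ` prefix of
the infinite word `s_1 s_2 ⋯ s_n s_1 ⋯` on the root lattice. -/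
def Rseq {n : ℕ} (hn : 0 < n) (A : Matrix (Fin n) (Fin n) ℤ) (ℓ : ℕ) (v : Fin n → ℤ) :
    Fin n → ℤ :=
  (List.range ℓ).foldr (fun t w => Rmap A (idx n hn ((t : ℤ) + 1)) w) v


private lemma skew_diag {n : ℕ} {B : Matrix (Fin n) (Fin n) ℤ}
    (h : IsSkewSymmetrizable B) (i : Fin n) : B i i = 0 := by
  obtain ⟨d, hd, hB⟩ := h
  have h1 := hB i i
  have hdi := hd i
  have : (B i i : ℚ) = 0 := by nlinarith
  exact_mod_cast this

private lemma skew_sign {n : ℕ} {B : Matrix (Fin n) (Fin n) ℤ}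
    (h : IsSkewSymmetrizable B) {i j : Fin n} (hij : 0 ≤ B i j) : B j i ≤ 0 := by
  obtain ⟨d, hd, hB⟩ := h
  have h1 := hB i j
  have hdi := hd i
  have hdj := hd j
  have hij' : (0:ℚ) ≤ (B i j : ℚ) := by exact_mod_cast hij
  have : (B j i : ℚ) ≤ 0 := by nlinarith
  exact_mod_cast this

private lemma idx_val {n : ℕ} (hn : 0 < n) (ℓ : ℕ) :
    ((idx n hn ((ℓ : ℤ) + 1)) : ℕ) = ℓ % n := by
  simp only [idx, add_sub_cancel_right]
  rw [← Int.natCast_mod, Int.toNat_natCast]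

private lemma Rseq_zero {n : ℕ} (hn : 0 < n) (A : Matrix (Fin n) (Fin n) ℤ)
    (v : Fin n → ℤ) : Rseq hn A 0 v = v := rfl

private lemma Rseq_succ {n : ℕ} (hn : 0 < n) (A : Matrix (Fin n) (Fin n) ℤ) (ℓ : ℕ)
    (v : Fin n → ℤ) :
    Rseq hn A (ℓ + 1) v = Rseq hn A ℓ (Rmap A (idx n hn ((ℓ : ℤ) + 1)) v) := by
  simp [Rseq, List.range_succ]

private lemma Rmap_add {n : ℕ} (A : Matrix (Fin n) (Fin n) ℤ) (i : Fin n)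
    (v w : Fin n → ℤ) : Rmap A i (v + w) = Rmap A i v + Rmap A i w := by
  funext r
  simp only [Rmap, Pi.add_apply, Pi.sub_apply, Pi.smul_apply, smul_eq_mul, mul_add,
    Finset.sum_add_distrib]
  ring

private lemma Rmap_smul {n : ℕ} (A : Matrix (Fin n) (Fin n) ℤ) (i : Fin n)
    (c : ℤ) (v : Fin n → ℤ) : Rmap A i (c • v) = c • Rmap A i v := by
  funext r
  simp only [Rmap, Pi.smul_apply, Pi.sub_apply, smul_eq_mul, mul_comm, mul_left_comm]
  rw [show (∑ x, c * (A i x * v x)) = c * ∑ x, A i x * v x by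
    rw [Finset.mul_sum]]
  ring

private lemma Rseq_add {n : ℕ} (hn : 0 < n) (A : Matrix (Fin n) (Fin n) ℤ) (ℓ : ℕ) :
    ∀ v w : Fin n → ℤ, Rseq hn A ℓ (v + w) = Rseq hn A ℓ v + Rseq hn A ℓ w := by
  induction ℓ with
  | zero => intro v w; rfl
  | succ ℓ ih => intro v w; rw [Rseq_succ, Rmap_add, ih, Rseq_succ, Rseq_succ]

private lemma Rseq_smul {n : ℕ} (hn : 0 < n) (A : Matrix (Fin n) (Fin n) ℤ) (ℓ : ℕ)
    (c : ℤ) : ∀ v : Fin n → ℤ, Rseq hn A ℓ (c • v) = c • Rseq hn A ℓ v := by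
  induction ℓ with
  | zero => intro v; rfl
  | succ ℓ ih => intro v; rw [Rseq_succ, Rmap_smul, ih, Rseq_succ]

private lemma Rseq_neg {n : ℕ} (hn : 0 < n) (A : Matrix (Fin n) (Fin n) ℤ) (ℓ : ℕ)
    (v : Fin n → ℤ) : Rseq hn A ℓ (-v) = - Rseq hn A ℓ v := by
  have := Rseq_smul hn A ℓ (-1) v
  simpa using this

private lemma Rmap_single {n : ℕ} (A : Matrix (Fin n) (Fin n) ℤ) (i j : Fin n) :
    Rmap A i (Pi.single j 1) = Pi.single j 1 - A i j • Pi.single i 1 := by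
  have h : (∑ l, A i l * (Pi.single j 1 : Fin n → ℤ) l) = A i j := by
    simp [Pi.single_apply]
  unfold Rmap
  rw [h]

private def esign (s : ℕ) {n : ℕ} (i : Fin n) : ℤ := if (i : ℕ) < s then -1 else 1

private lemma key {n : ℕ} (hn : 0 < n) (B : Matrix (Fin n) (Fin n) ℤ)
    (hskew : IsSkewSymmetrizable B)
    (hacyclic : ∀ i j : Fin n, i < j → 0 ≤ B i j)
    (hred : ∀ m : ℕ, 1 ≤ m → ∀ r : Fin n,
      0 ≤ Rseq hn (cartanCompanion B) (m - 1) (Pi.single (idx n hn (m : ℤ)) (1 : ℤ)) r) :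
    ∀ ℓ : ℕ,
    (∀ i j : Fin n, Mseq hn B ℓ (Sum.inl i) j = esign (ℓ % n) i * esign (ℓ % n) j * B i j)
    ∧ (∀ i r : Fin n, Mseq hn B ℓ (Sum.inr r) i
        = Rseq hn (cartanCompanion B) ℓ (Pi.single i (1:ℤ)) r) := by
  intro ℓ
  induction ℓ with
  | zero =>
    constructor
    · intro i j
      show initialM B (Sum.inl i) j = _
      simp [initialM, esign]
    · intro i r
      show initialM B (Sum.inr r) i = _
      simp [initialM, Rseq, Pi.single_apply]
  | succ ℓ ih =>
    obtain ⟨ihT, ihC⟩ := ih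
    set A := cartanCompanion B with hA
    set k : Fin n := idx n hn ((ℓ:ℤ)+1) with hkdef
    have hk : (k : ℕ) = ℓ % n := idx_val hn ℓ
    set s : ℕ := ℓ % n with hsdef
    have hslt : s < n := Nat.mod_lt _ hn
    have hesk : esign s k = 1 := by simp [esign, hk]
    have hrow : ∀ j : Fin n, esign s k * esign s j * B k j = |B k j| := by
      intro j
      rw [hesk, one_mul]
      by_cases hj : (j:ℕ) < s
      · have hjk : j < k := by rw [Fin.lt_def, hk]; exact hj
        have h2 : B k j ≤ 0 := skew_sign hskew (hacyclic j k hjk)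
        rw [abs_of_nonpos h2]
        simp [esign, hj]
      · rcases eq_or_ne j k with rfl | hne
        · simp [skew_diag hskew]
        · have hjs : (j:ℕ) ≠ s := fun h => hne (Fin.ext (by rw [h, hk]))
          have hkj : k < j := by rw [Fin.lt_def, hk]; omega
          rw [abs_of_nonneg (hacyclic k j hkj)]
          simp [esign, hj]
    have hcol : ∀ i : Fin n, esign s i * esign s k * B i k ≤ 0 := by
      intro i
      rw [hesk, mul_one]
      by_cases hi : (i:ℕ) < s
      · have hik : i < k := by rw [Fin.lt_def, hk]; exact hi
        have h1 := hacyclic i k hik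
        simp only [esign, if_pos hi]
        omega
      · rcases eq_or_ne i k with rfl | hne
        · simp [skew_diag hskew]
        · have his : (i:ℕ) ≠ s := fun h => hne (Fin.ext (by rw [h, hk]))
          have hki : k < i := by rw [Fin.lt_def, hk]; omega
          have h1 := skew_sign hskew (hacyclic k i hki)
          simp only [esign, if_neg hi]
          omega
    have hs' : (ℓ+1) % n = if s + 1 = n then 0 else s + 1 := by
      rw [← Nat.mod_add_mod]
      split
      next h => rw [← hsdef] at *; rw [h, Nat.mod_self]
      next h =>
        rw [← hsdef] at *
        exact Nat.mod_eq_of_lt (by omega)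
    have hsign2 : ∀ i j : Fin n, i ≠ k → j ≠ k →
        esign ((ℓ+1) % n) i * esign ((ℓ+1) % n) j = esign s i * esign s j := by
      intro i j hi hj
      have his : (i:ℕ) ≠ s := fun h => hi (Fin.ext (by rw [h, hk]))
      have hjs : (j:ℕ) ≠ s := fun h => hj (Fin.ext (by rw [h, hk]))
      have hiv := i.isLt
      have hjv := j.isLt
      rw [hs']
      unfold esign
      split_ifs <;> first | omega | norm_num
    have hsign3 : ∀ j : Fin n, j ≠ k →
        esign ((ℓ+1) % n) k * esign ((ℓ+1) % n) j = -(esign s k * esign s j) := by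
      intro j hj
      have hjs : (j:ℕ) ≠ s := fun h => hj (Fin.ext (by rw [h, hk]))
      have hjv := j.isLt
      rw [hs']
      unfold esign
      rw [hk]
      split_ifs <;> first | omega | norm_num
    have hstep : Mseq hn B (ℓ+1) = mutate k (Mseq hn B ℓ) := rfl
    constructor
    · -- top part
      intro i j
      rw [hstep]
      unfold mutate
      simp only [Matrix.of_apply]
      by_cases hcond : i = k ∨ j = k
      · rw [if_pos (hcond.imp (fun h => by rw [h]) id)]
        rw [ihT i j]
        rcases eq_or_ne i k with rfl | hik
        · rcases eq_or_ne j k with rfl | hjk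
          · rw [skew_diag hskew]
            ring
          · linear_combination (-(B k j)) * hsign3 j hjk
        · have hjk : j = k := by tauto
          subst hjk
          linear_combination (-(B i k)) * hsign3 i hik
      · obtain ⟨hik, hjk⟩ := not_or.mp hcond
        rw [if_neg (by simp only [Sum.inl.injEq]; exact hcond)]
        rw [ihT i j, ihT i k, ihT k j, hrow j]
        rw [max_eq_right (hcol i), max_eq_right (neg_nonpos.mpr (abs_nonneg (B k j)))]
        simp only [zero_mul, mul_zero, add_zero, sub_zero]
        linear_combination (-(B i j)) * hsign2 i j hik hjk
    · -- bottom part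
      intro i r
      rw [hstep]
      unfold mutate
      simp only [Matrix.of_apply]
      by_cases hik : i = k
      · subst hik
        rw [if_pos (Or.inr rfl), ihC]
        rw [Rseq_succ, ← hkdef, Rmap_single]
        have hAkk : A k k = (2:ℤ) := by simp [hA, cartanCompanion]
        rw [hAkk]
        have hcomb : (Pi.single k 1 : Fin n → ℤ) - (2:ℤ) • (Pi.single k 1 : Fin n → ℤ)
            = -(Pi.single k 1 : Fin n → ℤ) := by
          funext x
          simp only [Pi.sub_apply, Pi.smul_apply, Pi.neg_apply, smul_eq_mul]
          ring
        rw [hcomb, Rseq_neg]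
        rfl
      · rw [if_neg (by simp [hik])]
        rw [ihC i r, ihC k r, ihT k i, hrow i]
        have hpos : 0 ≤ Rseq hn A ℓ (Pi.single k (1:ℤ)) r := by
          have h := hred (ℓ+1) (by omega) r
          have hc : ((ℓ+1 : ℕ) : ℤ) = (ℓ:ℤ)+1 := by push_cast; ring
          rw [hc] at h
          simpa [← hA, ← hkdef] using h
        rw [max_eq_left hpos, max_eq_right (neg_nonpos.mpr hpos), max_eq_left (abs_nonneg (B k i))]
        simp only [zero_mul, sub_zero]
        rw [Rseq_succ, ← hkdef, Rmap_single]
        have hAki : A k i = -|B k i| := by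
          simp [hA, cartanCompanion, Ne.symm hik]
        rw [hAki]
        have hcomb : (Pi.single i 1 : Fin n → ℤ) - (-|B k i|) • (Pi.single k 1 : Fin n → ℤ)
            = (Pi.single i 1 : Fin n → ℤ) + |B k i| • (Pi.single k 1 : Fin n → ℤ) := by
          funext x
          simp only [Pi.sub_apply, Pi.add_apply, Pi.smul_apply, smul_eq_mul]
          ring
        rw [hcomb, Rseq_add, Rseq_smul]
        simp only [Pi.add_apply, Pi.smul_apply, smul_eq_mul]
        ring

/-- The c-vectors along the path `t_0 — t_1 — t_2 — ⋯` in the acyclic belt: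
`α_{i;t_ℓ} = c^∞_{≤ℓ} α_i`, and for `ℓ ≥ 1` the c-vector `α_{⟨ℓ⟩;t_ℓ}` is a negative
root while `α_{⟨ℓ+1⟩;t_ℓ}` is a positive root. -/
theorem statement8 (n : ℕ) (hn : 0 < n) (B : Matrix (Fin n) (Fin n) ℤ)
    (hskew : IsSkewSymmetrizable B)
    (hacyclic : ∀ i j : Fin n, i < j → 0 ≤ B i j)
    (hred : ∀ m : ℕ, 1 ≤ m → ∀ r : Fin n,
      0 ≤ Rseq hn (cartanCompanion B) (m - 1)
            (Pi.single (idx n hn (m : ℤ)) (1 : ℤ)) r) :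
    (∀ (ℓ : ℕ) (i r : Fin n),
      Mseq hn B ℓ (Sum.inr r) i
        = Rseq hn (cartanCompanion B) ℓ (Pi.single i (1 : ℤ)) r) ∧
    (∀ ℓ : ℕ, 1 ≤ ℓ → ∀ r : Fin n,
      Mseq hn B ℓ (Sum.inr r) (idx n hn (ℓ : ℤ)) ≤ 0 ∧
      0 ≤ Mseq hn B ℓ (Sum.inr r) (idx n hn ((ℓ : ℤ) + 1))) := by
  have hkey := key hn B hskew hacyclic hred
  constructor
  · intro ℓ i r
    exact (hkey ℓ).2 i r
  · intro ℓ hℓ r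
    obtain ⟨m, rfl⟩ : ∃ m, ℓ = m + 1 := ⟨ℓ - 1, by omega⟩
    have hc : ((m + 1 : ℕ) : ℤ) = (m : ℤ) + 1 := by push_cast; ring
    constructor
    · rw [hc, (hkey (m+1)).2 (idx n hn ((m:ℤ)+1)) r, Rseq_succ, Rmap_single]
      set k := idx n hn ((m:ℤ)+1) with hkdef
      have hAkk : cartanCompanion B k k = 2 := by simp [cartanCompanion]
      rw [hAkk]
      have hcomb : (Pi.single k 1 : Fin n → ℤ) - (2:ℤ) • (Pi.single k 1 : Fin n → ℤ)
          = -(Pi.single k 1 : Fin n → ℤ) := by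
        funext x
        simp only [Pi.sub_apply, Pi.smul_apply, Pi.neg_apply, smul_eq_mul]
        ring
      rw [hcomb, Rseq_neg]
      have h := hred (m+1) (by omega) r
      rw [hc] at h
      simp only [Nat.add_sub_cancel] at h
      rw [← hkdef] at h
      simp only [Pi.neg_apply]
      omega
    · rw [(hkey (m+1)).2 (idx n hn (((m+1:ℕ):ℤ)+1)) r]
      have h := hred (m+2) (by omega) r
      have hc2 : ((m + 2 : ℕ) : ℤ) = ((m + 1 : ℕ) : ℤ) + 1 := by push_cast; ring
      rw [hc2] at h
      simpa using h
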